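/- arXiv:1403.6231 — 7 statements merged into one kernel-verified Lean document; each statement's English description precedes it below -/
import Mathlib

section
/- Let A be a commutative ring with unity and let Φ be an n×m matrix over A with m ≤ n. If the column vector of all m×m minors of Φ (determinants of the submatrices Φ_{I_k}, k = 1,...,N = binom(n,m)) is left invertible over A, i.e., there exist c_1,...,c_N ∈ A with Σ_k c_k det(Φ_{I_k}) = 1, then Φ is left invertible over A: there exists Ψ ∈ A^{m×n} with ΨΦ = I_m. -/
open Matrix
open scoped Classical

/-- If the column of all maximal (m×m) minors of Φ ∈ A^{n×m} (m ≤ n) is left invertible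
over the commutative ring A, then Φ is left invertible over A. -/
theorem stmt2 {A : Type*} [CommRing A] {n m : ℕ} (hmn : m ≤ n)
    (Φ : Matrix (Fin n) (Fin m) A)
    (c : {f : Fin m → Fin n // StrictMono f} → A)
    (hc : ∑ f : {f : Fin m → Fin n // StrictMono f},
        c f * (Φ.submatrix f.1 id).det = 1) :
    ∃ Ψ : Matrix (Fin m) (Fin n) A, Ψ * Φ = 1 := by
  refine ⟨∑ f : {f : Fin m → Fin n // StrictMono f},
      c f • ((Φ.submatrix f.1 id).adjugate *
        (1 : Matrix (Fin n) (Fin n) A).submatrix f.1 id), ?_⟩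
  rw [Matrix.sum_mul]
  have key : ∀ f : {f : Fin m → Fin n // StrictMono f},
      (c f • ((Φ.submatrix f.1 id).adjugate *
        (1 : Matrix (Fin n) (Fin n) A).submatrix f.1 id)) * Φ
      = (c f * (Φ.submatrix f.1 id).det) • (1 : Matrix (Fin m) (Fin m) A) := by
    intro f
    have h1 : (1 : Matrix (Fin n) (Fin n) A).submatrix f.1 id * Φ = Φ.submatrix f.1 id := by
      ext i j
      simp [Matrix.mul_apply, Matrix.one_apply]
    rw [Matrix.smul_mul, Matrix.mul_assoc, h1, Matrix.adjugate_mul, smul_smul]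
  simp_rw [key]
  rw [← Finset.sum_smul, hc, one_smul]
end

section
/- Let A be a commutative ring with unity and Φ ∈ A^{n×m}, m ≤ n. Then Φ is left invertible over A if and only if there exist elements c_1,...,c_N ∈ A (N = binom(n,m)) such that Σ_k c_k det(Φ_{I_k}) = 1, where Φ_{I_1},...,Φ_{I_N} are all the m×m submatrices of Φ obtained by selecting m rows. -/
open Matrix
open scoped Classical

section Aux


variable {A : Type*} [CommRing A] {m n : ℕ}

-- factorization of an injective map as strictMono ∘ perm
lemma exists_factor (r : Fin m → Fin n) (hr : Function.Injective r) :
    ∃ (f : Fin m → Fin n) (σ : Equiv.Perm (Fin m)), StrictMono f ∧ f ∘ σ = r := by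
  classical
  set s : Finset (Fin n) := Finset.univ.image r with hs
  have hcard : s.card = m := by
    rw [hs, Finset.card_image_of_injective _ hr, Finset.card_univ, Fintype.card_fin]
  set f : Fin m → Fin n := fun i => s.orderEmbOfFin hcard i with hf
  have hfmono : StrictMono f := (s.orderEmbOfFin hcard).strictMono
  have hmem : ∀ i, r i ∈ s := fun i => Finset.mem_image_of_mem r (Finset.mem_univ i)
  -- define σ
  have hrange : ∀ i, ∃ j, f j = r i := by
    intro i
    have := (s.range_orderEmbOfFin hcard)
    have : r i ∈ Set.range (s.orderEmbOfFin hcard) := by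
      rw [this]; exact_mod_cast hmem i
    obtain ⟨j, hj⟩ := this
    exact ⟨j, hj⟩
  choose σ hσ using hrange
  have hσinj : Function.Injective σ := by
    intro a b hab
    apply hr
    rw [← hσ a, ← hσ b, hab]
  have hσbij : Function.Bijective σ := (Finite.injective_iff_bijective).mp hσinj
  refine ⟨f, Equiv.ofBijective σ hσbij, hfmono, ?_⟩
  funext i
  simp [Equiv.ofBijective, hσ]

lemma strictMono_eq_of_range (f g : Fin m → Fin n) (hf : StrictMono f) (hg : StrictMono g)
    (h : ∀ i, ∃ j, g j = f i) : f = g := by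
  classical
  set s : Finset (Fin n) := Finset.univ.image g with hs
  have hcard : s.card = m := by
    rw [hs, Finset.card_image_of_injective _ hg.injective, Finset.card_univ, Fintype.card_fin]
  have h1 : f = s.orderEmbOfFin hcard := by
    apply Finset.orderEmbOfFin_unique hcard
    · intro x
      obtain ⟨j, hj⟩ := h x
      exact hj ▸ Finset.mem_image_of_mem g (Finset.mem_univ j)
    · exact hf
  have h2 : g = s.orderEmbOfFin hcard := by
    apply Finset.orderEmbOfFin_unique hcard
    · intro x; exact Finset.mem_image_of_mem g (Finset.mem_univ x)
    · exact hg
  rw [h1, h2]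

lemma det_eq_sum_perm (N : Matrix (Fin m) (Fin m) A) :
    N.det = ∑ σ : Equiv.Perm (Fin m),
      ((Equiv.Perm.sign σ : ℤ) : A) * ∏ i, N i (σ i) := by
  conv_lhs => rw [← Matrix.det_transpose, Matrix.det_apply']
  simp [Matrix.transpose_apply]

lemma sum_inj_eq (F : (Fin m → Fin n) → A) :
    ∑ r ∈ Finset.univ.filter (fun r : Fin m → Fin n => Function.Injective r), F r
      = ∑ p : {f : Fin m → Fin n // StrictMono f} × Equiv.Perm (Fin m),
          F (p.1.1 ∘ p.2) := by
  classical
  have h0 : ∑ r ∈ Finset.univ.filter (fun r : Fin m → Fin n => Function.Injective r), F r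
      = ∑ a : {r : Fin m → Fin n // Function.Injective r}, F a.1 :=
    Finset.sum_subtype _ (by simp) F
  rw [h0]
  refine (Fintype.sum_bijective
    (fun p : {f : Fin m → Fin n // StrictMono f} × Equiv.Perm (Fin m) =>
      (⟨p.1.1 ∘ p.2, (p.1.2.injective.comp p.2.injective)⟩ :
        {r : Fin m → Fin n // Function.Injective r})) ⟨?_, ?_⟩ _ _ (fun p => rfl)).symm
  · rintro ⟨⟨f, hf⟩, σ⟩ ⟨⟨g, hg⟩, τ⟩ h
    simp only [Subtype.mk.injEq] at h
    have hfg : f = g := by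
      apply strictMono_eq_of_range f g hf hg
      intro i
      refine ⟨τ (σ.symm i), ?_⟩
      have h2 := congrFun h (σ.symm i)
      simp only [Function.comp_apply, Equiv.apply_symm_apply] at h2
      exact h2.symm
    subst hfg
    have : σ = τ := by
      apply Equiv.ext
      intro i
      exact hf.injective (congrFun h i)
    simp [this]
  · rintro ⟨r, hr⟩
    obtain ⟨f, σ, hf, hfa⟩ := exists_factor r hr
    exact ⟨⟨⟨f, hf⟩, σ⟩, by simp [hfa]⟩

lemma cauchyBinet (Ψ : Matrix (Fin m) (Fin n) A) (Φ : Matrix (Fin n) (Fin m) A) :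
    (Ψ * Φ).det = ∑ f : {f : Fin m → Fin n // StrictMono f},
      (Ψ.submatrix id f.1).det * (Φ.submatrix f.1 id).det := by
  classical
  -- expand rows
  have hrow : (fun i => (Ψ * Φ) i) = fun i => ∑ j : Fin n, Ψ i j • Φ j := by
    funext i j'
    simp [Matrix.mul_apply, Finset.sum_apply]
  have h1 : (Ψ * Φ).det
      = ∑ r : Fin m → Fin n, (∏ i, Ψ i (r i)) * (Φ.submatrix r id).det := by
    show Matrix.detRowAlternating (fun i => (Ψ * Φ) i) = _
    rw [hrow]
    erw [(Matrix.detRowAlternating (R := A) (n := Fin m)).toMultilinearMap.map_sum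
      (g := fun i j => Ψ i j • Φ j)]
    refine Finset.sum_congr rfl fun r _ => ?_
    have := (Matrix.detRowAlternating (R := A) (n := Fin m)).toMultilinearMap.map_smul_univ
      (fun i => Ψ i (r i)) (fun i => Φ (r i))
    erw [this]
    rw [smul_eq_mul]
    rfl
  rw [h1]
  -- kill non-injective terms
  rw [← Finset.sum_filter_add_sum_filter_not Finset.univ
    (fun r : Fin m → Fin n => Function.Injective r)]
  have hz : ∑ r ∈ Finset.univ.filter
      (fun r : Fin m → Fin n => ¬ Function.Injective r),
      (∏ i, Ψ i (r i)) * (Φ.submatrix r id).det = 0 := by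
    refine Finset.sum_eq_zero fun r hr => ?_
    simp only [Finset.mem_filter] at hr
    rw [Function.not_injective_iff] at hr
    obtain ⟨a, b, hab, hne⟩ := hr.2
    have : (Φ.submatrix r id).det = 0 := by
      apply Matrix.det_zero_of_row_eq hne
      funext j
      simp [Matrix.submatrix_apply, hab]
    rw [this, mul_zero]
  rw [hz, add_zero]
  rw [sum_inj_eq]
  rw [Fintype.sum_prod_type]
  refine Finset.sum_congr rfl fun f _ => ?_
  -- inner sum over permutations
  have key : ∀ σ : Equiv.Perm (Fin m),
      (Φ.submatrix (f.1 ∘ σ) id).det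
        = ((Equiv.Perm.sign σ : ℤ) : A) * (Φ.submatrix f.1 id).det := by
    intro σ
    have : Φ.submatrix (f.1 ∘ σ) id = (Φ.submatrix f.1 id).submatrix σ id := by
      funext i j; simp [Matrix.submatrix_apply]
    rw [this, Matrix.det_permute]
  calc ∑ σ : Equiv.Perm (Fin m),
        (∏ i, Ψ i ((f.1 ∘ σ) i)) * (Φ.submatrix (f.1 ∘ σ) id).det
      = ∑ σ : Equiv.Perm (Fin m),
        (((Equiv.Perm.sign σ : ℤ) : A) * ∏ i, (Ψ.submatrix id f.1) i (σ i))
          * (Φ.submatrix f.1 id).det := by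
        refine Finset.sum_congr rfl fun σ _ => ?_
        rw [key σ]
        simp only [Matrix.submatrix_apply, id_eq, Function.comp_apply]
        ring
    _ = (Ψ.submatrix id f.1).det * (Φ.submatrix f.1 id).det := by
        rw [← Finset.sum_mul, ← det_eq_sum_perm]

end Aux

/-- Theorem 2.2(i): Φ ∈ A^{n×m} (m ≤ n) is left invertible over the commutative ring A
iff the column of all its maximal (m×m) minors is left invertible over A. -/
theorem stmt3 {A : Type*} [CommRing A] {n m : ℕ} (hmn : m ≤ n)
    (Φ : Matrix (Fin n) (Fin m) A) :
    (∃ Ψ : Matrix (Fin m) (Fin n) A, Ψ * Φ = 1) ↔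
    (∃ c : {f : Fin m → Fin n // StrictMono f} → A,
      ∑ f : {f : Fin m → Fin n // StrictMono f},
        c f * (Φ.submatrix f.1 id).det = 1) := by
  constructor
  · rintro ⟨Ψ, hΨ⟩
    refine ⟨fun f => (Ψ.submatrix id f.1).det, ?_⟩
    have h := cauchyBinet Ψ Φ
    rw [hΨ, Matrix.det_one] at h
    exact h.symm
  · rintro ⟨c, hc⟩
    refine ⟨∑ f : {f : Fin m → Fin n // StrictMono f},
      c f • ((Φ.submatrix f.1 id).adjugate *
        ((1 : Matrix (Fin n) (Fin n) A).submatrix f.1 id)), ?_⟩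
    rw [Matrix.sum_mul]
    have hterm : ∀ f : {f : Fin m → Fin n // StrictMono f},
        (c f • ((Φ.submatrix f.1 id).adjugate *
          ((1 : Matrix (Fin n) (Fin n) A).submatrix f.1 id))) * Φ
        = (c f * (Φ.submatrix f.1 id).det) • (1 : Matrix (Fin m) (Fin m) A) := by
      intro f
      rw [Matrix.smul_mul, Matrix.mul_assoc]
      have h2 : ((1 : Matrix (Fin n) (Fin n) A).submatrix f.1 id) * Φ
          = Φ.submatrix f.1 id := by
        have h3 := Matrix.submatrix_mul_equiv (1 : Matrix (Fin n) (Fin n) A) Φ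
          f.1 (Equiv.refl (Fin n)) id
        simpa using h3
      rw [h2, Matrix.adjugate_mul, smul_smul]
    simp_rw [hterm]
    rw [← Finset.sum_smul, hc, one_smul]
end

section
/- Let A be a commutative ring with unity and Φ ∈ A^{n×(n-1)}. For p ∈ {1,...,n} let Δ_{p;·}(Φ) denote the determinant of the (n-1)×(n-1) matrix obtained by deleting row p from Φ. Then Φ is left invertible over A if and only if there exist c_1,...,c_n ∈ A with Σ_{p=1}^n c_p Δ_{p;·}(Φ) = 1. -/
/-!
Adjoin a column `x` to `Φ` and a row `y` to a left inverse `Ψ`: the product of the two square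
matrices has determinant `y ⬝ x - y ⬝ ΦΨx`, while Laplace expansion along the new column gives
`det [Φ | x] = ∑ₚ ± xₚ Δₚ`. Taking `x = y = eₚ` and summing over `p`, the right-hand sides add up
to `(n + 1) - tr (ΦΨ) = (n + 1) - tr (ΨΦ) = 1`. Conversely, if `∑ₚ cₚ Δₚ = 1`, then
`∑ₚ cₚ adj (Φₚ) Sₚ` is a left inverse, where `Sₚ` selects the rows of `Φₚ`.
-/

open Matrix

namespace Matrix

variable {A : Type*} [CommRing A]

theorem exists_mul_eq_one_of_sum_mul_det_submatrix_eq_one {m ι : Type*} [Fintype m]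
    [DecidableEq m] [Fintype ι] {n : Type*} [Fintype n] [DecidableEq n]
    (Φ : Matrix m n A) (r : ι → n → m) (c : ι → A)
    (hc : ∑ i, c i * (Φ.submatrix (r i) id).det = 1) :
    ∃ Ψ : Matrix n m A, Ψ * Φ = 1 := by
  refine ⟨∑ i, c i • ((Φ.submatrix (r i) id).adjugate * (1 : Matrix m m A).submatrix (r i) id),
    ?_⟩
  have hsel (i : ι) : (1 : Matrix m m A).submatrix (r i) id * Φ = Φ.submatrix (r i) id :=
    one_submatrix_mul (r i) (Equiv.refl m) Φ
  simp only [Matrix.sum_mul, Matrix.smul_mul, Matrix.mul_assoc, hsel, adjugate_mul, smul_smul]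
  rw [← Finset.sum_smul, hc, one_smul]

variable {n : ℕ}

/-- The square matrix `[Φ | x]`. -/
def appendCol (Φ : Matrix (Fin (n + 1)) (Fin n) A) (x : Fin (n + 1) → A) :
    Matrix (Fin (n + 1)) (Fin (n + 1)) A :=
  (fromCols Φ (replicateCol (Fin 1) x)).submatrix id finSumFinEquiv.symm

/-- The square matrix `[Ψ ; yᵀ]`. -/
def appendRow (Ψ : Matrix (Fin n) (Fin (n + 1)) A) (y : Fin (n + 1) → A) :
    Matrix (Fin (n + 1)) (Fin (n + 1)) A :=
  (fromRows Ψ (replicateRow (Fin 1) y)).submatrix finSumFinEquiv.symm id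

theorem det_appendCol (Φ : Matrix (Fin (n + 1)) (Fin n) A) (x : Fin (n + 1) → A) :
    (appendCol Φ x).det =
      ∑ p : Fin (n + 1), (-1) ^ ((p : ℕ) + n) * x p * (Φ.submatrix p.succAbove id).det := by
  rw [det_succ_column _ (Fin.last n)]
  refine Finset.sum_congr rfl fun p _ => ?_
  have hminor : (appendCol Φ x).submatrix p.succAbove (Fin.last n).succAbove =
      Φ.submatrix p.succAbove id := by
    ext i k
    simp [appendCol, Fin.succAbove_last, finSumFinEquiv_symm_apply_castSucc]
  rw [hminor]
  simp [appendCol, finSumFinEquiv_symm_last]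

theorem det_appendRow_mul_appendCol {Φ : Matrix (Fin (n + 1)) (Fin n) A}
    {Ψ : Matrix (Fin n) (Fin (n + 1)) A} (hΨ : Ψ * Φ = 1) (x y : Fin (n + 1) → A) :
    (appendRow Ψ y * appendCol Φ x).det = y ⬝ᵥ x - y ⬝ᵥ (Φ * Ψ) *ᵥ x := by
  rw [appendRow, appendCol, ← submatrix_mul _ _ _ _ _ Function.bijective_id,
    det_submatrix_equiv_self, fromRows_mul_fromCols, hΨ, det_fromBlocks_one₁₁, det_fin_one,
    Matrix.mul_assoc, ← Matrix.mul_assoc Φ, ← replicateCol_mulVec (Φ * Ψ)]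
  simp

theorem det_appendCol_single (Φ : Matrix (Fin (n + 1)) (Fin n) A) (p : Fin (n + 1)) :
    (appendCol Φ (Pi.single p 1)).det =
      (-1) ^ ((p : ℕ) + n) * (Φ.submatrix p.succAbove id).det := by
  rw [det_appendCol, Finset.sum_eq_single p (fun q _ hq => by simp [hq]) (by simp)]
  simp

end Matrix

/-- Corollary 2.3: Φ ∈ A^{n×(n-1)} is left invertible over the commutative ring A iff the
column of its maximal minors Δ_{p;·}(Φ) is left invertible over A. -/
theorem stmt4 {A : Type*} [CommRing A] {n : ℕ}
    (Φ : Matrix (Fin (n + 1)) (Fin n) A) :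
    (∃ Ψ : Matrix (Fin n) (Fin (n + 1)) A, Ψ * Φ = 1) ↔
    (∃ c : Fin (n + 1) → A,
      ∑ p : Fin (n + 1), c p * (Φ.submatrix p.succAbove id).det = 1) := by
  constructor
  · rintro ⟨Ψ, hΨ⟩
    refine ⟨fun p => (-1) ^ ((p : ℕ) + n) * (appendRow Ψ (Pi.single p 1)).det, ?_⟩
    have hterm (p : Fin (n + 1)) : (-1) ^ ((p : ℕ) + n) * (appendRow Ψ (Pi.single p 1)).det *
        (Φ.submatrix p.succAbove id).det = 1 - (Φ * Ψ) p p := by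
      calc _ = (appendRow Ψ (Pi.single p 1) * appendCol Φ (Pi.single p 1)).det := by
            rw [det_mul, det_appendCol_single]; ring
        _ = 1 - (Φ * Ψ) p p := by simp [det_appendRow_mul_appendCol hΨ]
    calc _ = ∑ p : Fin (n + 1), (1 - (Φ * Ψ) p p) := Finset.sum_congr rfl fun p _ => hterm p
      _ = (n + 1) - (Ψ * Φ).trace := by
        rw [← trace_mul_comm Φ Ψ, Finset.sum_sub_distrib]; simp [trace]
      _ = 1 := by simp [hΨ]
  · rintro ⟨c, hc⟩
    exact exists_mul_eq_one_of_sum_mul_det_submatrix_eq_one Φ (fun p => p.succAbove) c hc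
end

section
/- Let A be a commutative ring with unity, Φ ∈ A^{n×(n-1)}, Ψ ∈ A^{(n-1)×n} with ΨΦ = I_{n-1}. Let Φ_e = [Φ N] where N ∈ A^{n×1} has entries N_j = (-1)^{j-1} Δ_{·;j}(Ψ), and let Ψ_e = [Ψ; Ñ] for an arbitrary row Ñ ∈ A^{1×n}. Then Ψ_e Φ_e is the block matrix [[I_{n-1}, 0],[ÑΦ, ÑN]] (i.e., the top-right (n-1)×1 block is zero). -/
/-!
Expanding along the first row, `v ⬝ᵥ N` is the determinant of `Ψ` with `v` stacked on top.
For `v` a row of `Ψ` that determinant has a repeated row, so `Ψ N = 0`; together with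
`Ψ Φ = 1` this gives the top row of blocks of `Ψ_e Φ_e`.
-/

open Matrix

namespace Matrix

section SignedMaximalMinors

variable {R : Type*} [CommRing R] {n : ℕ}

def signedMaximalMinors (Ψ : Matrix (Fin n) (Fin (n + 1)) R) : Fin (n + 1) → R :=
  fun j => (-1) ^ (j : ℕ) * (Ψ.submatrix id j.succAbove).det

theorem det_of_cons_eq_dotProduct (v : Fin (n + 1) → R) (Ψ : Matrix (Fin n) (Fin (n + 1)) R) :
    (of (Fin.cons v Ψ)).det = v ⬝ᵥ signedMaximalMinors Ψ := by
  rw [det_succ_row_zero, dotProduct]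
  refine Finset.sum_congr rfl fun j _ => ?_
  show (-1) ^ (j : ℕ) * v j * (Ψ.submatrix id j.succAbove).det =
    v j * ((-1) ^ (j : ℕ) * (Ψ.submatrix id j.succAbove).det)
  ring

theorem mulVec_signedMaximalMinors (Ψ : Matrix (Fin n) (Fin (n + 1)) R) :
    Ψ *ᵥ signedMaximalMinors Ψ = 0 := by
  ext q
  rw [mulVec, ← det_of_cons_eq_dotProduct, Pi.zero_apply]
  exact det_zero_of_row_eq (Fin.succ_ne_zero q).symm rfl

end SignedMaximalMinors

section Snoc

variable {m α : Type*} {k : ℕ}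

theorem of_snoc_eq_submatrix_fromCols (A : Matrix m (Fin k) α) (v : m → α) :
    of (fun i => Fin.snoc (A i) (v i) : m → Fin (k + 1) → α) =
      (fromCols A (replicateCol (Fin 1) v)).submatrix id finSumFinEquiv.symm := by
  ext i j
  refine Fin.lastCases ?_ (fun j => ?_) j <;> simp

theorem of_snoc_eq_submatrix_fromRows (A : Matrix (Fin k) m α) (v : m → α) :
    of (fun i j => (Fin.snoc (fun q => A q j) (v j) : Fin (k + 1) → α) i) =
      (fromRows A (replicateRow (Fin 1) v)).submatrix finSumFinEquiv.symm id := by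
  ext i j
  refine Fin.lastCases ?_ (fun i => ?_) i <;> simp

end Snoc

end Matrix

/-- Theorem 2.4(i): with N the column of signed maximal minors of Ψ and Ñ arbitrary,
Ψ_e Φ_e = [[I, 0], [ÑΦ, ÑN]]. -/
theorem stmt8 {R : Type*} [CommRing R] {n : ℕ}
    (Φ : Matrix (Fin (n + 1)) (Fin n) R) (Ψ : Matrix (Fin n) (Fin (n + 1)) R)
    (h : Ψ * Φ = 1)
    (N : Fin (n + 1) → R)
    (hN : ∀ j, N j = (-1 : R) ^ (j : ℕ) * (Ψ.submatrix id j.succAbove).det)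
    (Nt : Fin (n + 1) → R)
    (Φe Ψe : Matrix (Fin (n + 1)) (Fin (n + 1)) R)
    (hΦe : ∀ i j, Φe i j = (Fin.snoc (Φ i) (N i) : Fin (n + 1) → R) j)
    (hΨe : ∀ i j, Ψe i j = (Fin.snoc (fun q => Ψ q j) (Nt j) : Fin (n + 1) → R) i) :
    Ψe * Φe = (Matrix.reindex finSumFinEquiv finSumFinEquiv)
      (Matrix.fromBlocks (1 : Matrix (Fin n) (Fin n) R) 0
        (Matrix.of fun (_ : Fin 1) j => ∑ p, Nt p * Φ p j)
        (Matrix.of fun (_ : Fin 1) (_ : Fin 1) => ∑ p, Nt p * N p)) := by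
  have hΦe_blocks :
      Φe = (fromCols Φ (replicateCol (Fin 1) N)).submatrix id finSumFinEquiv.symm := by
    rw [← of_snoc_eq_submatrix_fromCols]
    ext i j
    exact hΦe i j
  have hΨe_blocks :
      Ψe = (fromRows Ψ (replicateRow (Fin 1) Nt)).submatrix finSumFinEquiv.symm id := by
    rw [← of_snoc_eq_submatrix_fromRows]
    ext i j
    exact hΨe i j
  have hΨN : Ψ * replicateCol (Fin 1) N = 0 := by
    rw [← replicateCol_mulVec, show N = signedMaximalMinors Ψ from funext hN,
      mulVec_signedMaximalMinors, replicateCol_zero]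
  rw [hΦe_blocks, hΨe_blocks, ← submatrix_mul _ _ _ _ _ Function.bijective_id,
    fromRows_mul_fromCols, h, hΨN, reindex_apply]
  rfl
end

section
/- Let A be a commutative ring with unity, Φ ∈ A^{n×(n-1)}, Ψ ∈ A^{(n-1)×n} with ΨΦ = I_{n-1}. Let Ψ_e = [Ψ; Ñ] where Ñ ∈ A^{1×n} has entries Ñ_j = (-1)^{j-1} Δ_{j;·}(Φ), and let Φ_e = [Φ N] for an arbitrary column N ∈ A^{n×1}. Then Ψ_e Φ_e equals the block matrix [[I_{n-1}, ΨN],[0, ÑN]] (i.e., the bottom-left 1×(n-1) block is zero, equivalently ÑΦ = 0). -/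
open Matrix

lemma aux_minor_sum {R : Type*} [CommRing R] {n : ℕ}
    (Φ : Matrix (Fin (n + 1)) (Fin n) R) (k : Fin n) :
    ∑ p : Fin (n + 1), ((-1 : R) ^ (p : ℕ) * (Φ.submatrix p.succAbove id).det) * Φ p k = 0 := by
  set M : Matrix (Fin (n + 1)) (Fin (n + 1)) R :=
    Matrix.of fun i j => (Fin.snoc (Φ i) (Φ i k) : Fin (n + 1) → R) j with hM
  have hdet : M.det = 0 := by
    apply Matrix.det_zero_of_column_eq (i := Fin.castSucc k) (j := Fin.last n)
    · exact ne_of_lt (Fin.castSucc_lt_last k)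
    · intro p
      simp [hM]
  have hexp := Matrix.det_succ_column M (Fin.last n)
  rw [hdet] at hexp
  have hsub : ∀ i : Fin (n + 1),
      M.submatrix i.succAbove (Fin.last n).succAbove = Φ.submatrix i.succAbove id := by
    intro i
    ext a b
    simp [hM, Fin.succAbove_last, Matrix.submatrix_apply]
  have hlast : ∀ i : Fin (n + 1), M i (Fin.last n) = Φ i k := by
    intro i; simp [hM]
  have key : (-1 : R) ^ n *
      ∑ p : Fin (n + 1), ((-1 : R) ^ (p : ℕ) * (Φ.submatrix p.succAbove id).det) * Φ p k = 0 := by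
    rw [Finset.mul_sum]
    rw [eq_comm] at hexp
    rw [← hexp]
    apply Finset.sum_congr rfl
    intro i _
    rw [hsub i, hlast i, Fin.val_last, pow_add]
    ring
  have := congrArg (fun x => (-1 : R) ^ n * x) key
  simpa [← mul_assoc, ← mul_pow] using this

/-- Theorem 2.4(ii): with Ñ the row of signed maximal minors of Φ and N arbitrary,
Ψ_e Φ_e = [[I, ΨN], [0, ÑN]]. -/
theorem stmt9 {R : Type*} [CommRing R] {n : ℕ}
    (Φ : Matrix (Fin (n + 1)) (Fin n) R) (Ψ : Matrix (Fin n) (Fin (n + 1)) R)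
    (h : Ψ * Φ = 1)
    (Nt : Fin (n + 1) → R)
    (hNt : ∀ j, Nt j = (-1 : R) ^ (j : ℕ) * (Φ.submatrix j.succAbove id).det)
    (N : Fin (n + 1) → R)
    (Φe Ψe : Matrix (Fin (n + 1)) (Fin (n + 1)) R)
    (hΦe : ∀ i j, Φe i j = (Fin.snoc (Φ i) (N i) : Fin (n + 1) → R) j)
    (hΨe : ∀ i j, Ψe i j = (Fin.snoc (fun q => Ψ q j) (Nt j) : Fin (n + 1) → R) i) :
    Ψe * Φe = (Matrix.reindex finSumFinEquiv finSumFinEquiv)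
      (Matrix.fromBlocks (1 : Matrix (Fin n) (Fin n) R)
        (Matrix.of fun i (_ : Fin 1) => ∑ p, Ψ i p * N p)
        0
        (Matrix.of fun (_ : Fin 1) (_ : Fin 1) => ∑ p, Nt p * N p)) := by
  ext i j
  rw [Matrix.mul_apply]
  simp only [Matrix.reindex_apply, Matrix.submatrix_apply]
  refine Fin.lastCases ?_ ?_ i <;> [skip; intro i'] <;>
    refine Fin.lastCases ?_ ?_ j <;> [skip; intro j'; skip; intro j']
  · -- i = last, j = last
    have : finSumFinEquiv.symm (Fin.last n) = Sum.inr 0 := by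
      rw [Equiv.symm_apply_eq]; simp [finSumFinEquiv]; exact Fin.ext (by simp)
    rw [this]
    simp only [Matrix.fromBlocks_apply₂₂, Matrix.of_apply]
    apply Finset.sum_congr rfl
    intro p _
    rw [hΨe, hΦe]
    simp
  · -- i = last, j = castSucc j'
    have h1 : finSumFinEquiv.symm (Fin.last n) = Sum.inr 0 := by
      rw [Equiv.symm_apply_eq]; simp [finSumFinEquiv]; exact Fin.ext (by simp)
    have h2 : finSumFinEquiv.symm (Fin.castSucc j') = Sum.inl j' := by
      rw [Equiv.symm_apply_eq]; simp [finSumFinEquiv, Fin.castSucc]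
    rw [h1, h2]
    simp only [Matrix.fromBlocks_apply₂₁, Matrix.zero_apply]
    have : ∀ p : Fin (n+1), Ψe (Fin.last n) p * Φe p (Fin.castSucc j') = Nt p * Φ p j' := by
      intro p; rw [hΨe, hΦe]; simp
    rw [Finset.sum_congr rfl fun p _ => this p]
    simp only [hNt]
    exact aux_minor_sum Φ j'
  · -- i = castSucc i', j = last
    have h1 : finSumFinEquiv.symm (Fin.last n) = Sum.inr 0 := by
      rw [Equiv.symm_apply_eq]; simp [finSumFinEquiv]; exact Fin.ext (by simp)
    have h2 : finSumFinEquiv.symm (Fin.castSucc i') = Sum.inl i' := by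
      rw [Equiv.symm_apply_eq]; simp [finSumFinEquiv, Fin.castSucc]
    rw [h1, h2]
    simp only [Matrix.fromBlocks_apply₁₂, Matrix.of_apply]
    apply Finset.sum_congr rfl
    intro p _
    rw [hΨe, hΦe]
    simp
  · -- both castSucc
    have h1 : finSumFinEquiv.symm (Fin.castSucc i') = Sum.inl i' := by
      rw [Equiv.symm_apply_eq]; simp [finSumFinEquiv, Fin.castSucc]
    have h2 : finSumFinEquiv.symm (Fin.castSucc j') = Sum.inl j' := by
      rw [Equiv.symm_apply_eq]; simp [finSumFinEquiv, Fin.castSucc]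
    rw [h1, h2]
    simp only [Matrix.fromBlocks_apply₁₁]
    have : ∀ p : Fin (n+1), Ψe (Fin.castSucc i') p * Φe p (Fin.castSucc j') = Ψ i' p * Φ p j' := by
      intro p; rw [hΨe, hΦe]; simp
    rw [Finset.sum_congr rfl fun p _ => this p, ← Matrix.mul_apply, h]
end

section
/- Let A be a commutative ring with unity, and let Φ ∈ A^{n×(n-1)} and Ψ ∈ A^{(n-1)×n} satisfy ΨΦ = I_{n-1}. Then the row vector Δ* = (Δ_{·;1}(Ψ), ..., Δ_{·;n}(Ψ)) of maximal minors of Ψ is a left inverse of the column vector Δ = (Δ_{1;·}(Φ), ..., Δ_{n;·}(Φ))^T of maximal minors of Φ: Σ_{j=1}^n Δ_{·;j}(Ψ) Δ_{j;·}(Φ) = 1. Conversely, given any left inverse (Δ*_1,...,Δ*_n) of Δ, an explicit left inverse of Φ is obtained whose j-th row is Ψ_j = (-1)^j Δ* M_j Ĩ_n, where M_j is the antisymmetric n×n matrix with (p,s)-entry Δ_{p,s;j}(Φ) for p < s (the minor of Φ omitting rows p, s and column j), and Ĩ_n = diag(1,-1,...,(-1)^{n+1}). -/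
/-!
The first half is the Cauchy–Binet formula for a `k × (k+1)` times a `(k+1) × k` matrix:
expanding `det (A * B)` multilinearly in the columns of `A * B` leaves only the injective
column selections `Fin k → Fin (k+1)`, and each of these is `j.succAbove ∘ σ` for the unique
missing row `j` and a permutation `σ`.

For the second half fix a row `p` and put `A = Φ` without row `p`. The vector
`s ↦ (-1)^(j+1) (M_j)_{p s} (-1)^s` vanishes at `s = p`, and at `s = p.succAbove t` it is the
cofactor `adjugate A j t`. Hence its product with the column `k` of `Φ` is
`(adjugate A * A) j k = δ_{jk} det A`, and summing against the weights `d p` gives `δ_{jk}`.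
-/

open Matrix Finset Function

theorem Fin.range_succAbove_comp_of_injective {k : ℕ} {j : Fin (k + 1)} {q : Fin k → Fin k}
    (h : Injective (j.succAbove ∘ q)) : Set.range (j.succAbove ∘ q) = {j}ᶜ := by
  rw [(Finite.injective_iff_surjective.mp h.of_comp).range_comp, Fin.range_succAbove]

theorem Fin.sum_eq_sum_sum_succAbove_comp {M : Type*} [AddCommMonoid M] {k : ℕ}
    (g : (Fin k → Fin (k + 1)) → M) (hg : ∀ p, ¬Injective p → g p = 0) :
    ∑ p, g p = ∑ j : Fin (k + 1), ∑ q : Fin k → Fin k, g (j.succAbove ∘ q) := by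
  rw [← Fintype.sum_prod_type']
  symm
  refine sum_bij_ne_zero (fun x _ _ => x.1.succAbove ∘ x.2) (fun _ _ _ => mem_univ _)
    (fun ⟨j, q⟩ _ hq ⟨j', q'⟩ _ _ h => ?_) (fun p _ hp => ?_) fun _ _ _ => rfl
  · have hinj : Injective (j.succAbove ∘ q) := not_imp_comm.mp (hg _) hq
    have hj : j = j' := by
      have hrange := range_succAbove_comp_of_injective hinj
      rw [h, range_succAbove_comp_of_injective (h ▸ hinj)] at hrange
      simpa using hrange.symm
    subst hj
    exact Prod.ext rfl (Fin.succAbove_right_injective.comp_left h)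
  · obtain ⟨j, hj⟩ : ∃ j, ∀ i, p i ≠ j := by
      by_contra! h
      have := Fintype.card_le_of_surjective p h
      simp at this
    choose q hq using fun i => Fin.exists_succAbove_eq (hj i)
    exact ⟨(j, q), mem_univ _, by simpa [comp_def, hq] using hp, funext hq⟩

namespace Matrix

variable {R : Type*} [CommRing R]

theorem det_mul_eq_sum_prod_mul_det_submatrix {m n : Type*} [Fintype m] [DecidableEq m]
    [Fintype n] [DecidableEq n] (A : Matrix m n R) (B : Matrix n m R) :
    det (A * B) = ∑ p : m → n, (∏ i, B (p i) i) * det (A.submatrix id p) := by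
  have hrows : (A * B)ᵀ = fun i => ∑ l, B l i • Aᵀ l := by
    ext i r; simp [Matrix.mul_apply, mul_comm]
  rw [← det_transpose, hrows]
  change (detRowAlternating (R := R) (n := m)).toMultilinearMap _ = _
  rw [MultilinearMap.map_sum]
  refine sum_congr rfl fun p _ => ?_
  rw [MultilinearMap.map_smul_univ, smul_eq_mul, ← det_transpose (A.submatrix id p)]
  rfl

theorem det_mul_eq_sum_det_submatrix_succAbove {k : ℕ} (A : Matrix (Fin k) (Fin (k + 1)) R)
    (B : Matrix (Fin (k + 1)) (Fin k) R) :
    det (A * B) =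
      ∑ j : Fin (k + 1), det (A.submatrix id j.succAbove) * det (B.submatrix j.succAbove id) := by
  rw [det_mul_eq_sum_prod_mul_det_submatrix, Fin.sum_eq_sum_sum_succAbove_comp]
  · refine sum_congr rfl fun j _ => ?_
    rw [← det_mul, det_mul_eq_sum_prod_mul_det_submatrix]
    rfl
  · intro p hp
    obtain ⟨i, i', hpi, hi⟩ : ∃ i i', p i = p i' ∧ i ≠ i' := by
      simpa [Injective, and_comm] using hp
    rw [det_zero_of_column_eq hi fun r => by simp [hpi], mul_zero]

variable {m : ℕ}

/-- The antisymmetric matrix `M_j` of the paper: for `p < s` its `(p, s)` entry is the minor of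
`Φ` omitting the rows `p`, `s` and the column `j`. -/
def twoRowMinors (Φ : Matrix (Fin (m + 2)) (Fin (m + 1)) R) (j : Fin (m + 1)) :
    Matrix (Fin (m + 2)) (Fin (m + 2)) R :=
  of fun p s =>
    if hps : p < s then
      det (Φ.submatrix
        (s.succAbove ∘ (p.castLT ((Fin.lt_def.mp hps).trans_le s.is_le)).succAbove) j.succAbove)
    else if hsp : s < p then
      -det (Φ.submatrix
        (p.succAbove ∘ (s.castLT ((Fin.lt_def.mp hsp).trans_le p.is_le)).succAbove) j.succAbove)
    else 0

theorem twoRowMinors_self (Φ : Matrix (Fin (m + 2)) (Fin (m + 1)) R) (j : Fin (m + 1))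
    (p : Fin (m + 2)) : twoRowMinors Φ j p p = 0 := by
  simp [twoRowMinors]

theorem twoRowMinors_succAbove_mul_neg_one_pow (Φ : Matrix (Fin (m + 2)) (Fin (m + 1)) R)
    (j : Fin (m + 1)) (p : Fin (m + 2)) (t : Fin (m + 1)) :
    twoRowMinors Φ j p (p.succAbove t) * (-1) ^ (p.succAbove t : ℕ) =
      -((-1) ^ (t : ℕ) *
        det ((Φ.submatrix p.succAbove id).submatrix t.succAbove j.succAbove)) := by
  rcases lt_or_ge t.castSucc p with htp | hpt
  · rw [Fin.succAbove_of_castSucc_lt p t htp]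
    simp only [twoRowMinors, of_apply, dif_neg (asymm htp), dif_pos htp, Fin.castLT_castSucc,
      Fin.val_castSucc, submatrix_submatrix, id_comp]
    ring
  · have hpt' : p < t.succ := hpt.trans_lt t.castSucc_lt_succ
    have hrows :
        t.succ.succAbove ∘ (p.castLT ((Fin.lt_def.mp hpt').trans_le t.succ.is_le)).succAbove =
          p.succAbove ∘ t.succAbove := by
      have hpred : t.predAbove p = p.castLT ((Fin.lt_def.mp hpt').trans_le t.succ.is_le) :=
        Fin.ext (by simp [Fin.predAbove_of_le_castSucc _ _ hpt])
      funext i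
      rw [Function.comp_apply, Function.comp_apply,
        ← Fin.succAbove_succAbove_succAbove_predAbove p t i, Fin.succAbove_of_le_castSucc p t hpt,
        hpred]
    rw [Fin.succAbove_of_le_castSucc p t hpt]
    simp only [twoRowMinors, of_apply, dif_pos hpt', hrows, Fin.val_succ, pow_succ,
      submatrix_submatrix, id_comp]
    ring

theorem neg_one_pow_mul_sum_twoRowMinors_mul (Φ : Matrix (Fin (m + 2)) (Fin (m + 1)) R)
    (j k : Fin (m + 1)) (p : Fin (m + 2)) :
    (-1) ^ ((j : ℕ) + 1) * ∑ s, twoRowMinors Φ j p s * (-1) ^ (s : ℕ) * Φ s k =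
      (adjugate (Φ.submatrix p.succAbove id) * Φ.submatrix p.succAbove id) j k := by
  rw [Fin.sum_univ_succAbove _ p, twoRowMinors_self, zero_mul, zero_mul, zero_add, mul_sum,
    Matrix.mul_apply]
  refine sum_congr rfl fun t _ => ?_
  rw [twoRowMinors_succAbove_mul_neg_one_pow, adjugate_fin_succ_eq_det_submatrix]
  simp only [submatrix_apply, id_eq, pow_add]
  ring

end Matrix

/-- Theorem 2.2(ii)-(iii) in the case m = n-1 (here the matrix Φ is (m+2)×(m+1)):
(1) if Ψ is a left inverse of Φ, the row of maximal minors of Ψ is a left inverse of the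
column of maximal minors of Φ; (2) conversely, any left inverse (d_p) of the column of
maximal minors of Φ produces the explicit left inverse Ψ' of Φ whose j-th row is
(-1)^j Δ* M_j Ĩ_n. -/
theorem stmt14 {R : Type*} [CommRing R] {m : ℕ}
    (Φ : Matrix (Fin (m + 2)) (Fin (m + 1)) R) :
    (∀ Ψ : Matrix (Fin (m + 1)) (Fin (m + 2)) R, Ψ * Φ = 1 →
      ∑ j : Fin (m + 2),
        (Ψ.submatrix id j.succAbove).det * (Φ.submatrix j.succAbove id).det = 1)
    ∧
    (∀ d : Fin (m + 2) → R,
      (∑ p : Fin (m + 2), d p * (Φ.submatrix p.succAbove id).det = 1) →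
      ∀ Ψ' : Matrix (Fin (m + 1)) (Fin (m + 2)) R,
      (∀ j s, Ψ' j s = (-1 : R) ^ ((j : ℕ) + 1) *
          (∑ p : Fin (m + 2), d p *
            (if hps : p < s then
              (Φ.submatrix
                (fun i => s.succAbove
                  ((⟨(p : ℕ), lt_of_lt_of_le (Fin.lt_iff_val_lt_val.mp hps) (Fin.is_le s)⟩ :
                    Fin (m + 1)).succAbove i))
                j.succAbove).det
            else if hsp : s < p then
              -(Φ.submatrix
                (fun i => p.succAbove
                  ((⟨(s : ℕ), lt_of_lt_of_le (Fin.lt_iff_val_lt_val.mp hsp) (Fin.is_le p)⟩ :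
                    Fin (m + 1)).succAbove i))
                j.succAbove).det
            else 0)) * (-1 : R) ^ (s : ℕ)) →
      Ψ' * Φ = 1) := by
  refine ⟨fun Ψ hΨ => ?_, fun d hd Ψ' hΨ' => ?_⟩
  · rw [← det_mul_eq_sum_det_submatrix_succAbove, hΨ, det_one]
  · have hrow : ∀ j s, Ψ' j s =
        (-1 : R) ^ ((j : ℕ) + 1) * (∑ p, d p * twoRowMinors Φ j p s) * (-1 : R) ^ (s : ℕ) :=
      hΨ'
    ext j k
    calc (Ψ' * Φ) j k
        = ∑ p, d p * ((-1) ^ ((j : ℕ) + 1) *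
            ∑ s, twoRowMinors Φ j p s * (-1) ^ (s : ℕ) * Φ s k) := by
          simp only [Matrix.mul_apply, hrow, mul_sum, sum_mul]
          rw [sum_comm]
          exact sum_congr rfl fun _ _ => sum_congr rfl fun _ _ => by ring
      _ = ∑ p, d p * (det (Φ.submatrix p.succAbove id) * (1 : Matrix _ _ R) j k) := by
          simp only [neg_one_pow_mul_sum_twoRowMinors_mul, adjugate_mul, Matrix.smul_apply,
            smul_eq_mul]
      _ = (1 : Matrix _ _ R) j k := by
          simp only [← mul_assoc, ← sum_mul, hd, one_mul]
end

section
/- Let A be a commutative ring with unity, n ≥ 2, and let G ∈ A^{n×n}. Suppose the submatrix Ψ ∈ A^{(n-1)×n} consisting of the first n-1 rows of G is right invertible over A with right inverse Φ ∈ A^{n×(n-1)} (ΨΦ = I_{n-1}). Let Φ_e = [Φ N] with N_j = (-1)^{j-1} Δ_{·;j}(Ψ). Then Φ_e is invertible over A and G·Φ_e = [[I_{n-1}, 0],[ ĝ_n Φ, (-1)^{n-1} det G ]], where ĝ_n denotes the last row of G; in particular G = G̃·Φ_e^{-1} with G̃ block lower triangular having diagonal blocks I_{n-1} and (-1)^{n-1}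 det G. -/
open Matrix

open Finset Equiv in
/-- Corank-one Cauchy–Binet. -/
private theorem cb_aux {R : Type*} [CommRing R] {n : ℕ} (A : Matrix (Fin n) (Fin (n+1)) R) (B : Matrix (Fin (n+1)) (Fin n) R) :
    (A * B).det = ∑ j : Fin (n+1),
      (A.submatrix id j.succAbove).det * (B.submatrix j.succAbove id).det := by
  classical
  have key : (A * B).det
      = ∑ f : Fin n → Fin (n+1), (A.submatrix id f).det * ∏ i, B (f i) i := by
    calc (A * B).det
        = ∑ σ : Equiv.Perm (Fin n), ((Equiv.Perm.sign σ : ℤ) : R)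
            * ∏ i, ∑ p, A (σ i) p * B p i := by
          simp only [det_apply', mul_apply]
      _ = ∑ σ : Equiv.Perm (Fin n), ∑ f : Fin n → Fin (n+1),
            ((Equiv.Perm.sign σ : ℤ) : R) * ∏ i, A (σ i) (f i) * B (f i) i := by
          simp only [Finset.prod_univ_sum, Fintype.piFinset_univ, Finset.mul_sum]
      _ = ∑ f : Fin n → Fin (n+1), ∑ σ : Equiv.Perm (Fin n),
            ((Equiv.Perm.sign σ : ℤ) : R) * ∏ i, A (σ i) (f i) * B (f i) i :=
          Finset.sum_comm
      _ = ∑ f : Fin n → Fin (n+1), (A.submatrix id f).det * ∏ i, B (f i) i := by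
          refine Finset.sum_congr rfl fun f _ => ?_
          rw [det_apply', Finset.sum_mul]
          refine Finset.sum_congr rfl fun σ _ => ?_
          simp [Finset.prod_mul_distrib, mul_assoc]
  have hzero : ∀ f : Fin n → Fin (n+1), ¬ Function.Injective f →
      (A.submatrix id f).det * ∏ i, B (f i) i = 0 := by
    intro f hf
    rw [Function.not_injective_iff] at hf
    obtain ⟨a, b, hab, hne⟩ := hf
    rw [det_zero_of_column_eq hne (fun k => by simp [hab]), zero_mul]
  have key2 : (A * B).det = ∑ f ∈ Finset.univ.filter
      (fun f : Fin n → Fin (n+1) => Function.Injective f),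
      (A.submatrix id f).det * ∏ i, B (f i) i := by
    rw [key]
    refine (Finset.sum_subset (Finset.filter_subset _ _) fun f _ hf => ?_).symm
    exact hzero f (by simpa using hf)
  have key3 : ∑ f ∈ Finset.univ.filter
      (fun f : Fin n → Fin (n+1) => Function.Injective f),
      (A.submatrix id f).det * ∏ i, B (f i) i
      = ∑ x : Fin (n+1) × Equiv.Perm (Fin n),
        (A.submatrix id (x.1.succAbove ∘ x.2)).det * ∏ i, B (x.1.succAbove (x.2 i)) i := by
    refine (Finset.sum_bij (fun (x : Fin (n+1) × Equiv.Perm (Fin n)) _ =>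
      x.1.succAbove ∘ x.2) ?_ ?_ ?_ ?_).symm
    · intro x _
      simp only [Finset.mem_filter, Finset.mem_univ, true_and]
      exact (Fin.succAbove_right_injective).comp x.2.injective
    · rintro ⟨j, σ⟩ _ ⟨j', σ'⟩ _ hx
      have hx' : j.succAbove ∘ σ = j'.succAbove ∘ σ' := hx
      have hj : j = j' := by
        by_contra hne
        obtain ⟨z, hz⟩ := Fin.exists_succAbove_eq (show j' ≠ j from Ne.symm hne)
        have h1 : (j.succAbove ∘ σ) (σ.symm z) = j' := by simp [hz]
        rw [hx'] at h1
        exact Fin.succAbove_ne j' (σ' (σ.symm z)) h1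
      subst hj
      have hσ : (σ : Fin n → Fin n) = σ' := by
        funext i
        exact Fin.succAbove_right_injective (congrFun hx' i)
      simp [Prod.ext_iff, Equiv.ext_iff, funext_iff.mp hσ]
    · intro f hf
      have hinj : Function.Injective f := by simpa using hf
      have hnsurj : ∃ j : Fin (n+1), ∀ i, f i ≠ j := by
        by_contra hc
        push_neg at hc
        have hs : Function.Surjective f := fun b => by
          obtain ⟨a, ha⟩ := hc b; exact ⟨a, ha⟩
        have := Fintype.card_le_of_surjective f hs
        simp [Fintype.card_fin] at this
      obtain ⟨j, hj⟩ := hnsurj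
      have hex : ∀ i, ∃ z, j.succAbove z = f i := fun i =>
        Fin.exists_succAbove_eq (hj i)
      choose g hg using hex
      have hginj : Function.Injective g := fun a b hab => by
        apply hinj
        rw [← hg a, ← hg b, hab]
      refine ⟨(j, Equiv.ofBijective g (Finite.injective_iff_bijective.mp hginj)),
        Finset.mem_univ _, funext fun i => ?_⟩
      exact hg i
    · intros; rfl
  have key4 : ∑ x : Fin (n+1) × Equiv.Perm (Fin n),
        (A.submatrix id (x.1.succAbove ∘ x.2)).det * ∏ i, B (x.1.succAbove (x.2 i)) i
      = ∑ j : Fin (n+1),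
        (A.submatrix id j.succAbove).det * (B.submatrix j.succAbove id).det := by
    rw [Fintype.sum_prod_type]
    refine Finset.sum_congr rfl fun j _ => ?_
    rw [det_apply' (B.submatrix j.succAbove id), Finset.mul_sum]
    refine Finset.sum_congr rfl fun σ _ => ?_
    have : (A.submatrix id (j.succAbove ∘ σ)).det
        = ((Equiv.Perm.sign σ : ℤ) : R) * (A.submatrix id j.succAbove).det := by
      rw [show A.submatrix id (j.succAbove ∘ σ)
          = (A.submatrix id j.succAbove).submatrix id σ by rfl]
      exact_mod_cast det_permute' σ _
    rw [this]
    simp only [submatrix_apply, id_eq]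
    ring
  rw [key2, key3, key4]


/-- Key step of Theorem 5.1: if the first n-1 rows Ψ of G are right invertible with right
inverse Φ, then Φ_e = [Φ N] (N the signed maximal minors of Ψ) is invertible and
G Φ_e = [[I, 0], [ĝ_n Φ, (-1)^{n-1} det G]]. (Here G is (n+1)×(n+1).) -/
theorem stmt16 {R : Type*} [CommRing R] {n : ℕ}
    (G : Matrix (Fin (n + 1)) (Fin (n + 1)) R)
    (Φ : Matrix (Fin (n + 1)) (Fin n) R)
    (h : G.submatrix Fin.castSucc id * Φ = 1)
    (N : Fin (n + 1) → R)
    (hN : ∀ j, N j = (-1 : R) ^ (j : ℕ) *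
      ((G.submatrix Fin.castSucc id).submatrix id j.succAbove).det)
    (Φe : Matrix (Fin (n + 1)) (Fin (n + 1)) R)
    (hΦe : ∀ i j, Φe i j = (Fin.snoc (Φ i) (N i) : Fin (n + 1) → R) j) :
    IsUnit Φe ∧
    G * Φe = (Matrix.reindex finSumFinEquiv finSumFinEquiv)
      (Matrix.fromBlocks (1 : Matrix (Fin n) (Fin n) R) 0
        (Matrix.of fun (_ : Fin 1) j => ∑ p, G (Fin.last n) p * Φ p j)
        (Matrix.of fun (_ : Fin 1) (_ : Fin 1) => (-1 : R) ^ n * G.det)) := by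
  classical
  set Ψ := G.submatrix Fin.castSucc id with hΨ
  have hnn : ((-1 : R)) ^ n * (-1) ^ n = 1 := by
    rw [← mul_pow]; simp
  -- Cauchy–Binet gives that the signed minors pair to 1
  have hS : ∑ j : Fin (n+1),
      (Ψ.submatrix id j.succAbove).det * (Φ.submatrix j.succAbove id).det = 1 := by
    rw [← cb_aux Ψ Φ, h, det_one]
  -- determinant of Φe
  have hdet : Φe.det = (-1 : R) ^ n := by
    rw [det_succ_column Φe (Fin.last n)]
    have hsub : ∀ i : Fin (n+1),
        Φe.submatrix i.succAbove (Fin.last n).succAbove = Φ.submatrix i.succAbove id := by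
      intro i
      ext k l
      simp [hΦe, Fin.succAbove_last]
    calc ∑ i : Fin (n+1), (-1 : R) ^ ((i : ℕ) + (Fin.last n : ℕ)) * Φe i (Fin.last n) *
          (Φe.submatrix i.succAbove (Fin.last n).succAbove).det
        = ∑ i : Fin (n+1), (-1 : R) ^ n *
            ((Ψ.submatrix id i.succAbove).det * (Φ.submatrix i.succAbove id).det) := by
          refine Finset.sum_congr rfl fun i _ => ?_
          rw [hsub i]
          have : Φe i (Fin.last n) = N i := by simp [hΦe]
          rw [this, hN i, Fin.val_last, pow_add]
          have hii : ((-1 : R)) ^ (i : ℕ) * (-1) ^ (i : ℕ) = 1 := by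
            rw [← mul_pow]; simp
          calc (-1 : R) ^ (i : ℕ) * (-1) ^ n *
                ((-1) ^ (i : ℕ) * (Ψ.submatrix id i.succAbove).det) *
                (Φ.submatrix i.succAbove id).det
              = ((-1 : R) ^ (i : ℕ) * (-1) ^ (i : ℕ)) * ((-1) ^ n *
                  ((Ψ.submatrix id i.succAbove).det * (Φ.submatrix i.succAbove id).det)) := by
                ring
            _ = (-1 : R) ^ n *
                  ((Ψ.submatrix id i.succAbove).det * (Φ.submatrix i.succAbove id).det) := by
                rw [hii, one_mul]
      _ = (-1 : R) ^ n := by rw [← Finset.mul_sum, hS, mul_one]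
  constructor
  · rw [Matrix.isUnit_iff_isUnit_det, hdet]
    exact (isUnit_one.neg).pow n
  · ext i j
    rw [mul_apply, reindex_apply, submatrix_apply]
    induction i using Fin.lastCases with
    | cast a =>
      have ea : finSumFinEquiv.symm (Fin.castSucc a) = Sum.inl a :=
        finSumFinEquiv_symm_apply_castAdd a
      induction j using Fin.lastCases with
      | cast b =>
        have eb : finSumFinEquiv.symm (Fin.castSucc b) = Sum.inl b :=
          finSumFinEquiv_symm_apply_castAdd b
        rw [ea, eb, fromBlocks_apply₁₁]
        have h1 : (Ψ * Φ) a b = (1 : Matrix (Fin n) (Fin n) R) a b := by rw [h]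
        rw [mul_apply] at h1
        rw [← h1]
        refine Finset.sum_congr rfl fun p _ => ?_
        simp [hΦe, hΨ]
      | last =>
        have eb : finSumFinEquiv.symm (Fin.last n) = Sum.inr 0 := by
          have : Fin.last n = Fin.natAdd n (0 : Fin 1) := by ext; simp
          rw [this, finSumFinEquiv_symm_apply_natAdd]
        rw [eb, ea, fromBlocks_apply₁₂]
        -- goal: ∑ p, G (castSucc a) p * Φe p (last n) = 0
        set M : Matrix (Fin (n+1)) (Fin (n+1)) R :=
          Matrix.of fun i j => (Fin.cases (G (Fin.castSucc a) j)
            (fun k => G (Fin.castSucc k) j) i : R) with hM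
        have hM0 : M.det = 0 := by
          refine det_zero_of_row_eq (i := 0) (j := a.succ) (Fin.succ_ne_zero a).symm ?_
          funext l
          simp [hM]
        have hexp := det_succ_row_zero M
        rw [hM0] at hexp
        have hsub : ∀ p : Fin (n+1),
            M.submatrix Fin.succ p.succAbove = Ψ.submatrix id p.succAbove := by
          intro p; ext k l; simp [hM, hΨ]
        calc ∑ p, G (Fin.castSucc a) p * Φe p (Fin.last n)
            = ∑ p : Fin (n+1), (-1:R) ^ (p : ℕ) * M 0 p *
                (M.submatrix Fin.succ p.succAbove).det := by
              refine Finset.sum_congr rfl fun p _ => ?_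
              rw [hsub p]
              have : Φe p (Fin.last n) = N p := by simp [hΦe]
              rw [this, hN p]
              simp only [hM, Matrix.of_apply, Fin.cases_zero]
              ring
          _ = 0 := hexp.symm
    | last =>
      have ea : finSumFinEquiv.symm (Fin.last n) = Sum.inr 0 := by
        have : Fin.last n = Fin.natAdd n (0 : Fin 1) := by ext; simp
        rw [this, finSumFinEquiv_symm_apply_natAdd]
      induction j using Fin.lastCases with
      | cast b =>
        have eb : finSumFinEquiv.symm (Fin.castSucc b) = Sum.inl b :=
          finSumFinEquiv_symm_apply_castAdd b
        rw [ea, eb, fromBlocks_apply₂₁]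
        simp only [Matrix.of_apply]
        refine Finset.sum_congr rfl fun p _ => ?_
        simp [hΦe]
      | last =>
        rw [ea, fromBlocks_apply₂₂]
        simp only [Matrix.of_apply]
        -- goal: ∑ p, G (last n) p * Φe p (last n) = (-1)^n * G.det
        have hexp := det_succ_row G (Fin.last n)
        have hsub : ∀ p : Fin (n+1),
            G.submatrix (Fin.last n).succAbove p.succAbove = Ψ.submatrix id p.succAbove := by
          intro p; ext k l; simp [hΨ, Fin.succAbove_last]
        calc ∑ p, G (Fin.last n) p * Φe p (Fin.last n)
            = ∑ p : Fin (n+1), (-1:R)^n * ((-1:R) ^ ((Fin.last n : ℕ) + (p : ℕ)) *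
                G (Fin.last n) p * (G.submatrix (Fin.last n).succAbove p.succAbove).det) := by
              refine Finset.sum_congr rfl fun p _ => ?_
              rw [hsub p]
              have : Φe p (Fin.last n) = N p := by simp [hΦe]
              rw [this, hN p, Fin.val_last, pow_add]
              calc G (Fin.last n) p * ((-1:R) ^ (p : ℕ) * (Ψ.submatrix id p.succAbove).det)
                  = ((-1:R)^n * (-1:R)^n) * ((-1:R) ^ (p : ℕ) *
                      G (Fin.last n) p * (Ψ.submatrix id p.succAbove).det) := by
                    rw [hnn]; ring
                _ = (-1:R)^n * ((-1:R)^n * (-1:R) ^ (p : ℕ) *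
                      G (Fin.last n) p * (Ψ.submatrix id p.succAbove).det) := by ring
          _ = (-1:R)^n * G.det := by rw [← Finset.mul_sum, ← hexp]
end
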